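/- arXiv:2512.05164 — 2 statements merged into one kernel-verified Lean document; each statement's English description precedes it below -/
import Mathlib

section
/- Let c > 0, let V be a real number with |V| > c, let η ∈ {−1, 1}, and let γ̃ := 1/√(V²/c² − 1). For any (t, x) ∈ ℝ², define x' := η·γ̃·(x − V·t) and t' := η·γ̃·(t − (V/c²)·x). Then x'² − c²·t'² = −(x² − c²·t²), i.e. the superluminal map reverses the sign of the Minkowski quadratic form (it is an anti-isometry in 1+1 dimensions). -/
/-! The linear part `(t, x) ↦ (t - (V / c²) x, x - V t)` multiplies the Minkowski form by
`1 - V² / c²`, which is negative exactly when `|V| > c`. The normalisation `η γ̃` rescales the form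
by `γ̃² = 1 / (V² / c² - 1)`, so the composite multiplies it by `-1`. -/

def minkowskiForm (c t x : ℝ) : ℝ := x ^ 2 - c ^ 2 * t ^ 2

lemma minkowskiForm_mul (c a t x : ℝ) :
    minkowskiForm c (a * t) (a * x) = a ^ 2 * minkowskiForm c t x := by
  unfold minkowskiForm
  ring

lemma minkowskiForm_boost {c : ℝ} (hc : c ≠ 0) (V t x : ℝ) :
    minkowskiForm c (t - V / c ^ 2 * x) (x - V * t) =
      -(V ^ 2 / c ^ 2 - 1) * minkowskiForm c t x := by
  unfold minkowskiForm
  field_simp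
  ring

lemma one_lt_sq_div_sq_of_lt_abs {c V : ℝ} (hc : 0 < c) (hV : c < |V|) : 1 < V ^ 2 / c ^ 2 := by
  rw [one_lt_div (by positivity), sq_lt_sq, abs_of_pos hc]
  exact hV

lemma one_div_sqrt_sq_mul_self {s : ℝ} (hs : 0 < s) : (1 / √s) ^ 2 * s = 1 := by
  rw [one_div_pow, Real.sq_sqrt hs.le, one_div_mul_cancel hs.ne']

/-- The superluminal branch of the Lorentz-type maps in 1+1 dimensions
reverses the sign of the Minkowski quadratic form (it is an anti-isometry). -/
theorem superluminal_anti_isometry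
    (c V η : ℝ) (hc : 0 < c) (hV : |V| > c) (hη : η = 1 ∨ η = -1)
    (γ : ℝ) (hγ : γ = 1 / Real.sqrt (V ^ 2 / c ^ 2 - 1))
    (t x t' x' : ℝ)
    (hx' : x' = η * γ * (x - V * t))
    (ht' : t' = η * γ * (t - (V / c ^ 2) * x)) :
    x' ^ 2 - c ^ 2 * t' ^ 2 = -(x ^ 2 - c ^ 2 * t ^ 2) := by
  have hη2 : η ^ 2 = 1 := by rcases hη with rfl | rfl <;> norm_num
  have hs : 0 < V ^ 2 / c ^ 2 - 1 := sub_pos.2 (one_lt_sq_div_sq_of_lt_abs hc hV)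
  subst hx' ht' hγ
  change minkowskiForm c _ _ = -minkowskiForm c t x
  rw [minkowskiForm_mul, minkowskiForm_boost hc.ne', mul_pow, hη2, one_mul, neg_mul, mul_neg,
    ← mul_assoc, one_div_sqrt_sq_mul_self hs, one_mul]
end

section
/- Let c > 0, let V be a real number with |V| > c, let η ∈ {−1, 1}, let γ̃ := 1/√(V²/c² − 1), and for (t, x) ∈ ℝ² set x' := η·γ̃·(x − V·t) and t' := η·γ̃·(t − (V/c²)·x). Then: (i) x² − c²·t² < 0 if and only if x'² − c²·t'² > 0 (timelike separations are mapped to spacelike ones and vice versa); and (ii) x² = c²·t² if and only if x'² = c²·t'² (null separations are mapped to null separations, so the null cone is preserved as a set). -/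
/-!
Expanding the squares, any map `(t, x) ↦ (k (t - V x / c²), k (x - V t))` multiplies the
interval `x² - c² t²` by `k² (1 - V² / c²)`. On the superluminal branch `k = η γ̃` with `η² = 1`
and `γ̃² = 1 / (V² / c² - 1)`, so this factor is exactly `-1`: the interval changes sign, which
exchanges timelike and spacelike displacements and fixes the null ones.
-/

lemma boost_interval (c V k t x : ℝ) (hc : c ≠ 0) :
    (k * (x - V * t)) ^ 2 - c ^ 2 * (k * (t - V / c ^ 2 * x)) ^ 2 =
      k ^ 2 * (1 - V ^ 2 / c ^ 2) * (x ^ 2 - c ^ 2 * t ^ 2) := by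
  field_simp
  ring

lemma superluminal_factor_eq_neg_one {c V : ℝ} (hc : 0 < c) (hV : c < |V|) :
    (1 / Real.sqrt (V ^ 2 / c ^ 2 - 1)) ^ 2 * (1 - V ^ 2 / c ^ 2) = -1 := by
  have hcV : c ^ 2 < V ^ 2 := by simpa only [sq_abs] using pow_lt_pow_left₀ hV hc.le two_ne_zero
  have hpos : 0 < V ^ 2 / c ^ 2 - 1 := by
    rw [sub_pos, one_lt_div (by positivity)]
    exact hcV
  rw [div_pow, one_pow, Real.sq_sqrt hpos.le, show 1 - V ^ 2 / c ^ 2 = -(V ^ 2 / c ^ 2 - 1) by ring,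
    mul_neg, one_div_mul_cancel hpos.ne']

/-- The superluminal map exchanges timelike and spacelike separations
and preserves the null cone as a set. -/
theorem superluminal_exchanges_timelike_spacelike_and_preserves_null
    (c V η : ℝ) (hc : 0 < c) (hV : |V| > c) (hη : η = 1 ∨ η = -1)
    (γ : ℝ) (hγ : γ = 1 / Real.sqrt (V ^ 2 / c ^ 2 - 1))
    (t x t' x' : ℝ)
    (hx' : x' = η * γ * (x - V * t))
    (ht' : t' = η * γ * (t - (V / c ^ 2) * x)) :
    (x ^ 2 - c ^ 2 * t ^ 2 < 0 ↔ x' ^ 2 - c ^ 2 * t' ^ 2 > 0) ∧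
    (x ^ 2 = c ^ 2 * t ^ 2 ↔ x' ^ 2 = c ^ 2 * t' ^ 2) := by
  have hη2 : η ^ 2 = 1 := by rcases hη with rfl | rfl <;> norm_num
  have hflip : x' ^ 2 - c ^ 2 * t' ^ 2 = -(x ^ 2 - c ^ 2 * t ^ 2) := by
    rw [hx', ht', boost_interval c V (η * γ) t x hc.ne', mul_pow, hη2, one_mul, hγ,
      superluminal_factor_eq_neg_one hc hV, neg_one_mul]
  refine ⟨?_, ?_⟩
  · rw [gt_iff_lt, hflip, neg_pos]
  · rw [← sub_eq_zero, ← sub_eq_zero (a := x' ^ 2), hflip, neg_eq_zero]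
end
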